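/- Let c ∈ {0,1}^n. Then c satisfies the parity check Σ_{i ∈ N_m} c[i] ≡ 0 (mod 2) if and only if for every subset F ⊆ N_m of odd cardinality, Σ_{i∈F} c[i] - Σ_{i∈N_m\F} c[i] ≤ |F| - 1. -/
import Mathlib


/-- A 0/1 vector `c` satisfies the parity check `∑_{i ∈ Nm} c i ≡ 0 (mod 2)` iff
it satisfies all of Feldman's parity inequalities for odd-cardinality subsets
`F ⊆ Nm`. -/
theorem parity_check_iff_feldman_inequalities
    {n : ℕ} (Nm : Finset (Fin n)) (c : Fin n → ℤ)
    (hc : ∀ i, c i = 0 ∨ c i = 1) :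
    Even (∑ i ∈ Nm, c i) ↔
      ∀ F ⊆ Nm, Odd F.card →
        ∑ i ∈ F, c i - ∑ i ∈ Nm \ F, c i ≤ (F.card : ℤ) - 1 := by
  constructor
  · intro hEven F hF hOdd
    have hsplit : ∑ i ∈ Nm \ F, c i + ∑ i ∈ F, c i = ∑ i ∈ Nm, c i :=
      Finset.sum_sdiff hF
    have hFle : ∑ i ∈ F, c i ≤ (F.card : ℤ) := by
      calc ∑ i ∈ F, c i ≤ ∑ _i ∈ F, (1:ℤ) :=
            Finset.sum_le_sum (fun i _ => by rcases hc i with h | h <;> simp [h])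
        _ = F.card := by simp
    have hnonneg : (0:ℤ) ≤ ∑ i ∈ Nm \ F, c i :=
      Finset.sum_nonneg (fun i _ => by rcases hc i with h | h <;> simp [h])
    by_cases h : ∑ i ∈ F, c i = (F.card : ℤ)
    · have hOddRest : Odd (∑ i ∈ Nm \ F, c i) := by
        have hOddF : Odd (∑ i ∈ F, c i) := by
          rw [h]; exact_mod_cast hOdd
        rcases hEven with ⟨k, hk⟩
        rcases hOddF with ⟨m, hm⟩
        refine ⟨k - m - 1, ?_⟩
        omega
      have : (1:ℤ) ≤ ∑ i ∈ Nm \ F, c i := by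
        rcases hOddRest with ⟨m, hm⟩
        omega
      omega
    · have : ∑ i ∈ F, c i ≤ (F.card : ℤ) - 1 := by omega
      omega
  · intro h
    rcases Int.even_or_odd (∑ i ∈ Nm, c i) with hE | hO
    · exact hE
    exfalso
    set F := Nm.filter (fun i => c i = 1) with hFdef
    have hFsub : F ⊆ Nm := Finset.filter_subset _ _
    have hFsum : ∑ i ∈ F, c i = (F.card : ℤ) := by
      rw [Finset.card_eq_sum_ones]
      push_cast
      exact Finset.sum_congr rfl (fun i hi => (Finset.mem_filter.mp hi).2)
    have hrest : ∑ i ∈ Nm \ F, c i = 0 := by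
      refine Finset.sum_eq_zero (fun i hi => ?_)
      rcases Finset.mem_sdiff.mp hi with ⟨hiN, hiF⟩
      rcases hc i with h0 | h1
      · exact h0
      · exact absurd (Finset.mem_filter.mpr ⟨hiN, h1⟩) hiF
    have hsplit : ∑ i ∈ Nm \ F, c i + ∑ i ∈ F, c i = ∑ i ∈ Nm, c i :=
      Finset.sum_sdiff hFsub
    have hOddCard : Odd F.card := by
      have : Odd ((F.card : ℤ)) := by
        have hcard : (F.card : ℤ) = ∑ i ∈ Nm, c i := by omega
        rw [hcard]; exact hO
      exact_mod_cast this
    have := h F hFsub hOddCard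
    rw [hFsum, hrest] at this
    omega
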